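/- arXiv:1307.0067 — 2 statements merged into one kernel-verified Lean document; each statement's English description precedes it below -/
import Mathlib

section
/- Consider a binary-input channel with 𝒳 = {0,1}, finite output alphabet 𝒴, and pmfs P₀, P₁ on 𝒴 such that there is a permutation f of 𝒴 with f ∘ f = id and P₀(y) = P₁(f(y)) for all y ∈ 𝒴. Let M ≥ 2, let ρ be a probability vector on Ω = {1,…,M} with ρᵢ < 1 for all i, and let γ: Ω → {0,1} be an encoding function. Set π₀ := Σ_{i: γ(i)=0} ρᵢ, π₁ := Σ_{i: γ(i)=1} ρᵢ and δ := π₀ − π₁. If 0 ≤ δ ≤ ρᵢ for every i with γ(i) = 0, then EJS(ρ, γ) ≥ D(P₀ ‖ ½P₀ + ½P₁) (which equals the capacity of such a symmetric binary-input channel). -/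
open Finset

/-- Kullback–Leibler divergence (base 2) between two pmfs on a finite set,
with the conventions `0·log₂(a/0) = 0` and `b·log₂(b/0) = +∞` for `b > 0`;
values in `[0,∞]` (formalized in the extended reals). -/
noncomputable def KL {Y : Type*} [Fintype Y] (P Q : Y → ℝ) : EReal :=
  ∑ y, if P y = 0 then (0 : EReal)
       else if Q y = 0 then (⊤ : EReal)
       else ((P y * Real.logb 2 (P y / Q y) : ℝ) : EReal)

/-- Extrinsic Jensen–Shannon divergence (for weight vectors with `ρ i < 1` for all `i`):
`EJS(ρ; P₁,…,P_M) = Σᵢ ρᵢ · D(Pᵢ ‖ Σ_{j≠i} (ρⱼ/(1−ρᵢ)) Pⱼ)`. -/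
noncomputable def EJS {Y : Type*} [Fintype Y] {M : ℕ} (ρ : Fin M → ℝ)
    (P : Fin M → Y → ℝ) : EReal :=
  ∑ i, ((ρ i : ℝ) : EReal) *
    KL (P i) (fun y => ∑ j ∈ univ.erase i, (ρ j / (1 - ρ i)) * P j y)

noncomputable def realKL {Y : Type*} [Fintype Y] (P Q : Y → ℝ) : ℝ :=
  ∑ y, if P y = 0 then 0 else P y * Real.logb 2 (P y / Q y)

lemma coe_fsum {ι : Type*} (s : Finset ι) (g : ι → ℝ) :
    ((∑ i ∈ s, g i : ℝ) : EReal) = ∑ i ∈ s, ((g i : ℝ) : EReal) := by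
  induction s using Finset.cons_induction with
  | empty => simp
  | cons a u ha ih => rw [Finset.sum_cons, Finset.sum_cons, EReal.coe_add, ih]

lemma ereal_sum_ne_bot {ι : Type*} (s : Finset ι) (f : ι → EReal)
    (hb : ∀ i ∈ s, f i ≠ ⊥) : ∑ i ∈ s, f i ≠ ⊥ := by
  induction s using Finset.cons_induction with
  | empty => simp
  | cons a u ha ih =>
      rw [Finset.sum_cons]
      intro hbot
      rcases EReal.add_eq_bot_iff.1 hbot with h' | h'
      · exact hb a (Finset.mem_cons_self a u) h'
      · exact ih (fun i hi => hb i (Finset.mem_cons_of_mem hi)) h'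

lemma ereal_sum_eq_top {ι : Type*} [DecidableEq ι] {s : Finset ι} {f : ι → EReal}
    (hb : ∀ i ∈ s, f i ≠ ⊥) {i0 : ι} (hi0 : i0 ∈ s) (ht : f i0 = ⊤) :
    ∑ i ∈ s, f i = ⊤ := by
  rw [← Finset.add_sum_erase s f hi0, ht]
  exact EReal.top_add_of_ne_bot
    (ereal_sum_ne_bot _ _ (fun i hi => hb i (Finset.mem_of_mem_erase hi)))

lemma KL_eq_top {Y : Type*} [Fintype Y] (P Q : Y → ℝ) (y0 : Y)
    (h1 : P y0 ≠ 0) (h2 : Q y0 = 0) : KL P Q = ⊤ := by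
  classical
  rw [KL]
  refine ereal_sum_eq_top (fun y _ => ?_) (Finset.mem_univ y0) ?_
  · split_ifs <;> simp [← EReal.coe_mul]
  · rw [if_neg h1, if_pos h2]

lemma KL_eq_coe {Y : Type*} [Fintype Y] (P Q : Y → ℝ)
    (hs : ∀ y, P y ≠ 0 → Q y ≠ 0) : KL P Q = ((realKL P Q : ℝ) : EReal) := by
  rw [KL, realKL, coe_fsum]
  refine Finset.sum_congr rfl (fun y _ => ?_)
  by_cases h : P y = 0
  · simp [h]
  · rw [if_neg h, if_neg h, if_neg (hs y h)]

lemma gibbs {Y : Type*} [Fintype Y] (P Q : Y → ℝ)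
    (hP0 : ∀ y, 0 ≤ P y) (hP1 : ∑ y, P y = 1)
    (hQ0 : ∀ y, 0 ≤ Q y) (hQ1 : ∑ y, Q y ≤ 1)
    (hs : ∀ y, P y ≠ 0 → Q y ≠ 0) : 0 ≤ realKL P Q := by
  have l2 : (0:ℝ) < Real.log 2 := Real.log_pos one_lt_two
  have hrw : realKL P Q
      = ∑ y ∈ univ.filter (fun y => ¬ P y = 0), P y * Real.logb 2 (P y / Q y) := by
    rw [realKL, Finset.sum_filter]
    exact Finset.sum_congr rfl (fun y _ => by rw [ite_not])
  have key : ∀ y ∈ univ.filter (fun y => ¬ P y = 0),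
      (P y - Q y) / Real.log 2 ≤ P y * Real.logb 2 (P y / Q y) := by
    intro y hy
    have hne : P y ≠ 0 := (Finset.mem_filter.1 hy).2
    have hp : 0 < P y := (hP0 y).lt_of_ne (Ne.symm hne)
    have hq : 0 < Q y := (hQ0 y).lt_of_ne (Ne.symm (hs y hne))
    have hlog : Real.log (Q y / P y) ≤ Q y / P y - 1 :=
      Real.log_le_sub_one_of_pos (by positivity)
    rw [Real.log_div hq.ne' hp.ne'] at hlog
    have hmul := mul_le_mul_of_nonneg_left hlog hp.le
    have hPQ : P y * (Q y / P y) = Q y := by field_simp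
    have hkey2 : P y - Q y ≤ P y * (Real.log (P y) - Real.log (Q y)) := by nlinarith
    rw [Real.logb, Real.log_div hp.ne' hq.ne', ← mul_div_assoc]
    gcongr
  have hsum := Finset.sum_le_sum key
  have hPS : ∑ y ∈ univ.filter (fun y => ¬ P y = 0), P y = 1 := by
    rw [Finset.sum_filter_of_ne (fun y _ h => h), hP1]
  have hQS : ∑ y ∈ univ.filter (fun y => ¬ P y = 0), Q y ≤ 1 := by
    refine le_trans (Finset.sum_le_sum_of_subset_of_nonneg (Finset.filter_subset _ _)
      (fun y _ _ => hQ0 y)) hQ1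
  have hlhs : ∑ y ∈ univ.filter (fun y => ¬ P y = 0), (P y - Q y) / Real.log 2
      = ((∑ y ∈ univ.filter (fun y => ¬ P y = 0), P y)
        - (∑ y ∈ univ.filter (fun y => ¬ P y = 0), Q y)) / Real.log 2 := by
    rw [← Finset.sum_div, Finset.sum_sub_distrib]
  rw [hrw]
  refine le_trans ?_ hsum
  rw [hlhs, hPS]
  apply div_nonneg (by linarith) l2.le

lemma pt_convex {p q t : ℝ} (hp : 0 < p) (hq : 0 < q) (ht0 : 0 < t) (ht1 : t ≤ 1) :
    p * Real.logb 2 (p / (t * q + (1 - t) * p)) ≤ t * (p * Real.logb 2 (p / q)) := by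
  have hx : 0 < t * q + (1 - t) * p := by nlinarith
  have hlog : t * Real.log q + (1 - t) * Real.log p ≤ Real.log (t * q + (1 - t) * p) := by
    have := strictConcaveOn_log_Ioi.concaveOn.2 (Set.mem_Ioi.2 hq) (Set.mem_Ioi.2 hp)
      ht0.le (show (0:ℝ) ≤ 1 - t by linarith) (show t + (1 - t) = 1 by ring)
    simpa [smul_eq_mul] using this
  have hmul := mul_le_mul_of_nonneg_left hlog hp.le
  have l2 : (0:ℝ) < Real.log 2 := Real.log_pos one_lt_two
  have hkey : p * (Real.log p - Real.log (t * q + (1 - t) * p))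
      ≤ t * (p * (Real.log p - Real.log q)) := by nlinarith
  rw [Real.logb, Real.logb, Real.log_div hp.ne' hx.ne', Real.log_div hp.ne' hq.ne',
    ← mul_div_assoc, ← mul_div_assoc, ← mul_div_assoc]
  gcongr
lemma core {Y : Type*} [Fintype Y] (P Q : Y → ℝ)
    (hP0 : ∀ y, 0 ≤ P y) (hP1 : ∑ y, P y = 1)
    (hQ0 : ∀ y, 0 ≤ Q y) (hQ1 : ∑ y, Q y = 1)
    (hs : ∀ y, P y ≠ 0 → Q y ≠ 0) (t : ℝ) (ht0 : 0 < t) (ht1 : t ≤ 1) :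
    realKL P (fun y => t * Q y + (1 - t) * P y) ≤ realKL P Q := by
  have h2 : 0 ≤ realKL P Q := gibbs P Q hP0 hP1 hQ0 hQ1.le hs
  have h1 : realKL P (fun y => t * Q y + (1 - t) * P y) ≤ t * realKL P Q := by
    rw [realKL, realKL, Finset.mul_sum]
    refine Finset.sum_le_sum (fun y _ => ?_)
    by_cases h : P y = 0
    · simp [h]
    · have hp : 0 < P y := (hP0 y).lt_of_ne (Ne.symm h)
      have hq : 0 < Q y := (hQ0 y).lt_of_ne (Ne.symm (hs y h))
      rw [if_neg h, if_neg h]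
      exact pt_convex hp hq ht0 ht1
  nlinarith

lemma ereal_core {Y : Type*} [Fintype Y] (P0 P1 : Y → ℝ)
    (hP00 : ∀ y, 0 ≤ P0 y) (hP01 : ∑ y, P0 y = 1)
    (hP10 : ∀ y, 0 ≤ P1 y) (hP11 : ∑ y, P1 y = 1)
    (a b : ℝ) (ha : 0 ≤ a) (hb : 0 ≤ b) (hab : a + b = 1) (ha2 : a ≤ 1 / 2) :
    KL P0 (fun y => (1 / 2) * P0 y + (1 / 2) * P1 y)
      ≤ KL P0 (fun y => a * P0 y + b * P1 y) := by
  by_cases hcase : ∀ y, P0 y ≠ 0 → a * P0 y + b * P1 y ≠ 0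
  · have hhalf : ∀ y, P0 y ≠ 0 → (1 / 2) * P0 y + (1 / 2) * P1 y ≠ 0 := by
      intro y hy
      have h1 : 0 < P0 y := (hP00 y).lt_of_ne (Ne.symm hy)
      have h2 := hP10 y
      nlinarith [h1, h2]
    rw [KL_eq_coe _ _ hcase, KL_eq_coe _ _ hhalf]
    rw [EReal.coe_le_coe_iff]
    have hbpos : (0:ℝ) < b := by linarith
    set t : ℝ := 1 / (2 * b) with ht
    have ht0 : 0 < t := by positivity
    have ht1 : t ≤ 1 := by rw [ht, div_le_one (by linarith)]; linarith
    have hQ0 : ∀ y, 0 ≤ a * P0 y + b * P1 y := by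
      intro y; have := hP00 y; have := hP10 y; positivity
    have hQ1 : ∑ y, (a * P0 y + b * P1 y) = 1 := by
      rw [Finset.sum_add_distrib, ← Finset.mul_sum, ← Finset.mul_sum, hP01, hP11]
      linarith
    have hmix : (fun y => t * (a * P0 y + b * P1 y) + (1 - t) * P0 y)
        = (fun y => (1 / 2) * P0 y + (1 / 2) * P1 y) := by
      funext y
      have haa : a = 1 - b := by linarith
      rw [ht, haa]
      field_simp
      ring
    have := core P0 (fun y => a * P0 y + b * P1 y) hP00 hP01 hQ0 hQ1 hcase t ht0 ht1
    calc realKL P0 (fun y => (1 / 2) * P0 y + (1 / 2) * P1 y)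
        = realKL P0 (fun y => t * (a * P0 y + b * P1 y) + (1 - t) * P0 y) := by rw [hmix]
      _ ≤ realKL P0 (fun y => a * P0 y + b * P1 y) := this
  · push_neg at hcase
    obtain ⟨y0, h1, h2⟩ := hcase
    rw [KL_eq_top P0 (fun y => a * P0 y + b * P1 y) y0 h1 h2]
    exact le_top

lemma KL_swap {Y : Type*} [Fintype Y] (P0 P1 : Y → ℝ) (f : Y → Y)
    (hf : Function.Involutive f) (hsym : ∀ y, P0 y = P1 (f y)) (a b : ℝ) :
    KL P1 (fun y => a * P0 y + b * P1 y) = KL P0 (fun y => a * P1 y + b * P0 y) := by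
  rw [KL, KL]
  apply Fintype.sum_equiv (hf.toPerm f)
  intro x
  have h0 : P0 (f x) = P1 x := by rw [hsym (f x), hf x]
  have h1 : P1 (f x) = P0 x := (hsym x).symm
  simp only [Function.Involutive.coe_toPerm, h0, h1]

/-- Proposition 4 (first part): for a symmetric binary-input channel
(`P₀(y) = P₁(f(y))` for an involutive permutation `f`), any encoding function `γ` with
`0 ≤ π₀ − π₁ ≤ ρᵢ` for every `i` with `γ(i) = 0` obtains EJS divergence at least
`D(P₀ ‖ ½P₀ + ½P₁)` (the capacity of such a channel). -/
theorem balanced_encoding_ejs_ge_capacity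
    {Y : Type*} [Fintype Y]
    (P0 P1 : Y → ℝ)
    (hP00 : ∀ y, 0 ≤ P0 y) (hP01 : ∑ y, P0 y = 1)
    (hP10 : ∀ y, 0 ≤ P1 y) (hP11 : ∑ y, P1 y = 1)
    (f : Y → Y) (hf : Function.Involutive f)
    (hsym : ∀ y, P0 y = P1 (f y))
    (M : ℕ) (hM : 2 ≤ M)
    (ρ : Fin M → ℝ) (hρ0 : ∀ i, 0 ≤ ρ i) (hρ1 : ∑ i, ρ i = 1)
    (hρlt : ∀ i, ρ i < 1)
    (γ : Fin M → Fin 2)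
    (hδ0 : 0 ≤ (∑ i ∈ univ.filter (fun i => γ i = 0), ρ i)
              - (∑ i ∈ univ.filter (fun i => γ i = 1), ρ i))
    (hδρ : ∀ i, γ i = 0 →
      (∑ j ∈ univ.filter (fun j => γ j = 0), ρ j)
          - (∑ j ∈ univ.filter (fun j => γ j = 1), ρ j) ≤ ρ i) :
    KL P0 (fun y => (1 / 2) * P0 y + (1 / 2) * P1 y)
      ≤ EJS ρ (fun i => if γ i = 0 then P0 else P1) := by
  classical
  have fin2 : ∀ x : Fin 2, ¬ x = 0 ↔ x = 1 := by decide
  set π0 := ∑ i ∈ univ.filter (fun i => γ i = 0), ρ i with hπ0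
  set π1 := ∑ i ∈ univ.filter (fun i => γ i = 1), ρ i with hπ1
  have hπsum : π0 + π1 = 1 := by
    rw [hπ0, hπ1, ← hρ1,
      ← Finset.sum_filter_add_sum_filter_not univ (fun i => γ i = 0) ρ]
    congr 1
    exact (Finset.filter_congr (fun j _ => (fin2 (γ j)).symm)).symm ▸ rfl
  have hhalf : ∀ y, P0 y ≠ 0 → (1 / 2) * P0 y + (1 / 2) * P1 y ≠ 0 := by
    intro y hy
    have h1 : 0 < P0 y := (hP00 y).lt_of_ne (Ne.symm hy)
    have h2 := hP10 y
    nlinarith [h1, h2]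
  set c := realKL P0 (fun y => (1 / 2) * P0 y + (1 / 2) * P1 y) with hc
  have hKLM : KL P0 (fun y => (1 / 2) * P0 y + (1 / 2) * P1 y) = (c : EReal) :=
    KL_eq_coe _ _ hhalf
  have key : ∀ i : Fin M, (c : EReal)
      ≤ KL (if γ i = 0 then P0 else P1)
          (fun y => ∑ j ∈ univ.erase i,
            (ρ j / (1 - ρ i)) * (if γ j = 0 then P0 else P1) y) := by
    intro i
    have hsi : 0 < 1 - ρ i := by linarith [hρlt i]
    set a := (∑ j ∈ (univ.erase i).filter (fun j => γ j = 0), ρ j) / (1 - ρ i) with hA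
    set b := (∑ j ∈ (univ.erase i).filter (fun j => γ j = 1), ρ j) / (1 - ρ i) with hB
    have hQrep : (fun y => ∑ j ∈ univ.erase i,
          (ρ j / (1 - ρ i)) * (if γ j = 0 then P0 else P1) y)
        = fun y => a * P0 y + b * P1 y := by
      funext y
      rw [← Finset.sum_filter_add_sum_filter_not (univ.erase i) (fun j => γ j = 0)]
      congr 1
      · rw [hA, Finset.sum_div, Finset.sum_mul]
        refine Finset.sum_congr rfl (fun j hj => ?_)
        rw [if_pos (Finset.mem_filter.1 hj).2]
      · rw [Finset.filter_congr (fun j _ => fin2 (γ j)), hB, Finset.sum_div,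
          Finset.sum_mul]
        refine Finset.sum_congr rfl (fun j hj => ?_)
        have h1 : γ j = 1 := (Finset.mem_filter.1 hj).2
        rw [if_neg (by rw [h1]; decide)]
    have ha0 : 0 ≤ a := by
      apply div_nonneg _ hsi.le
      exact Finset.sum_nonneg (fun j _ => hρ0 j)
    have hb0 : 0 ≤ b := by
      apply div_nonneg _ hsi.le
      exact Finset.sum_nonneg (fun j _ => hρ0 j)
    have hsplit : (∑ j ∈ (univ.erase i).filter (fun j => γ j = 0), ρ j)
        + (∑ j ∈ (univ.erase i).filter (fun j => γ j = 1), ρ j) = 1 - ρ i := by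
      rw [← Finset.filter_congr (fun j _ => fin2 (γ j)),
        Finset.sum_filter_add_sum_filter_not (univ.erase i) (fun j => γ j = 0) ρ,
        Finset.sum_erase_eq_sub (Finset.mem_univ i), hρ1]
    have hab : a + b = 1 := by
      rw [hA, hB, ← add_div, hsplit, div_self hsi.ne']
    by_cases hγ : γ i = 0
    · have hS0 : (univ.erase i).filter (fun j => γ j = 0) = (univ.filter (fun j => γ j = 0)).erase i := by
        rw [Finset.filter_erase]
      have haval : a = (π0 - ρ i) / (1 - ρ i) := by
        rw [hA, hS0, Finset.sum_erase_eq_sub (Finset.mem_filter.2 ⟨Finset.mem_univ i, hγ⟩), hπ0]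
      have ha2 : a ≤ 1 / 2 := by
        rw [haval, div_le_iff₀ hsi]
        have := hδρ i hγ
        linarith [hπsum]
      rw [if_pos hγ, hQrep, ← hKLM]
      exact ereal_core P0 P1 hP00 hP01 hP10 hP11 a b ha0 hb0 hab ha2
    · have hγ1 : γ i = 1 := (fin2 (γ i)).1 hγ
      have hS1 : (univ.erase i).filter (fun j => γ j = 1) = (univ.filter (fun j => γ j = 1)).erase i := by
        rw [Finset.filter_erase]
      have hbval : b = (π1 - ρ i) / (1 - ρ i) := by
        rw [hB, hS1, Finset.sum_erase_eq_sub (Finset.mem_filter.2 ⟨Finset.mem_univ i, hγ1⟩), hπ1]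
      have hb2 : b ≤ 1 / 2 := by
        rw [hbval, div_le_iff₀ hsi]
        have := hρ0 i
        linarith [hπsum, hδ0]
      rw [if_neg hγ, hQrep, KL_swap P0 P1 f hf hsym a b, ← hKLM]
      have hcomm : (fun y => a * P1 y + b * P0 y) = (fun y => b * P0 y + a * P1 y) := by
        funext y; ring
      rw [hcomm]
      exact ereal_core P0 P1 hP00 hP01 hP10 hP11 b a hb0 ha0 (by linarith) hb2
  rw [hKLM]
  simp only [EJS]
  calc (c : EReal) = ((∑ i, ρ i * c : ℝ) : EReal) := by
        rw [← Finset.sum_mul, hρ1, one_mul]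
    _ = ∑ i, ((ρ i * c : ℝ) : EReal) := coe_fsum _ _
    _ = ∑ i : Fin M, ((ρ i : ℝ) : EReal) * ((c : ℝ) : EReal) := by
        refine Finset.sum_congr rfl (fun i _ => ?_)
        rw [EReal.coe_mul]
    _ ≤ _ := by
        refine Finset.sum_le_sum (fun i _ => ?_)
        exact mul_le_mul_of_nonneg_left (key i) (by exact_mod_cast hρ0 i)
end

section
/- Consider a binary-input channel with 𝒳 = {0,1}, finite output alphabet 𝒴, and pmfs P₀, P₁ on 𝒴 such that there is a permutation f of 𝒴 with f ∘ f = id and P₀(y) = P₁(f(y)) for all y ∈ 𝒴. Let M ≥ 2 and let ρ be a probability vector on Ω = {1,…,M} with 0 < ρᵢ < 1 for all i. Let k* ∈ {1,…,M} be a minimizer of |Σ_{i=1}^k ρᵢ − 1/2| over k ∈ {1,…,M}, set s := Σ_{i=1}^{k*} ρᵢ, and assume s ≠ 1/2. Let k*₂ := k* − sign(s − 1/2) ∈ {0,1,…,M} (where sign(z) = 1 if z > 0 and −1 if z < 0), and set δ₁ := |s − 1/2| and δ₂ := |Σ_{i=1}^{k*₂} ρᵢ − 1/2| (with the empty sum equal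 to 0). Define encoding functions γ(i) := 0 iff i ≤ k*, and γ̄(i) := 0 iff i ≤ k*₂. Then for every λ with δ₂/(δ₁+δ₂) ≤ λ ≤ 1: λ·EJS(ρ, γ) + (1−λ)·EJS(ρ, γ̄) ≥ D(P₀ ‖ ½P₀ + ½P₁). -/
open Finset

noncomputable def Gc {Y : Type*} [Fintype Y] (P0 P1 : Y → ℝ) : ℝ :=
  ∑ y, if P0 y = 0 then 0 else P0 y * Real.logb 2 (P0 y / ((1/2) * P0 y + (1/2) * P1 y))

noncomputable def cslope {Y : Type*} [Fintype Y] (P0 P1 : Y → ℝ) : ℝ :=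
  ∑ y, P0 y * (P1 y - P0 y) / (P0 y + P1 y) * (2 / Real.log 2)

lemma ereal_coe_mul_le {t : ℝ} (ht : 0 ≤ t) {r : ℝ} {X : EReal} (h : (r : EReal) ≤ X) :
    ((t * r : ℝ) : EReal) ≤ (t : EReal) * X := by
  induction X using EReal.rec with
  | bot => exact absurd h (by simp)
  | coe x =>
    rw [← EReal.coe_mul, EReal.coe_le_coe_iff]
    exact mul_le_mul_of_nonneg_left (EReal.coe_le_coe_iff.1 h) ht
  | top =>
    rcases eq_or_lt_of_le ht with h0 | h0
    · simp [← h0]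
    · rw [EReal.mul_top_of_pos (by exact_mod_cast h0)]; exact le_top



lemma KL_term_ne_bot {Y : Type*} [Fintype Y] (P Q : Y → ℝ) (y : Y) :
    (if P y = 0 then (0 : EReal) else if Q y = 0 then (⊤ : EReal)
      else ((P y * Real.logb 2 (P y / Q y) : ℝ) : EReal)) ≠ ⊥ := by
  split_ifs
  · simp
  · simp
  · exact EReal.coe_ne_bot _

lemma ereal_sum_ne_bot_s17 {α : Type*} (s : Finset α) (g : α → EReal)
    (h : ∀ a ∈ s, g a ≠ ⊥) : ∑ a ∈ s, g a ≠ ⊥ := by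
  classical
  induction s using Finset.induction_on with
  | empty => simp
  | @insert a s hnot ih =>
    rw [Finset.sum_insert hnot, Ne, EReal.add_eq_bot_iff]
    push_neg
    exact ⟨h a (mem_insert_self a s), ih fun b hb => h b (mem_insert_of_mem hb)⟩

lemma ereal_sum_eq_top_s17 {α : Type*} (s : Finset α) (g : α → EReal)
    (h : ∀ a ∈ s, g a ≠ ⊥) {a₀ : α} (ha₀ : a₀ ∈ s) (htop : g a₀ = ⊤) :
    ∑ a ∈ s, g a = ⊤ := by
  classical
  rw [← Finset.add_sum_erase s g ha₀, htop]
  exact EReal.top_add_of_ne_bot (ereal_sum_ne_bot_s17 _ _ fun b hb => h b (mem_of_mem_erase hb))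

lemma ereal_coe_sum {α : Type*} (s : Finset α) (g : α → ℝ) :
    ((∑ a ∈ s, g a : ℝ) : EReal) = ∑ a ∈ s, ((g a : ℝ) : EReal) := by
  classical
  induction s using Finset.induction_on with
  | empty => simp
  | @insert a s hnot ih => rw [Finset.sum_insert hnot, Finset.sum_insert hnot, EReal.coe_add, ih]

lemma KL_eq_coe_s17 {Y : Type*} [Fintype Y] (P Q : Y → ℝ) (h : ∀ y, P y ≠ 0 → Q y ≠ 0) :
    KL P Q = ((∑ y, if P y = 0 then (0:ℝ) else P y * Real.logb 2 (P y / Q y) : ℝ) : EReal) := by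
  rw [KL, ereal_coe_sum]
  refine Finset.sum_congr rfl fun y _ => ?_
  by_cases hy : P y = 0
  · simp [hy]
  · rw [if_neg hy, if_neg hy, if_neg (h y hy)]


lemma tangent_pt (a b w : ℝ) (ha : 0 < a) (hb : 0 ≤ b) (hw0 : 0 ≤ w) (hw1 : w ≤ 1)
    (hd : 0 < w * a + (1 - w) * b) :
    a * Real.logb 2 (a / ((1/2) * a + (1/2) * b)) + a * (b - a) / (a + b) * (2 / Real.log 2) * (w - 1/2)
      ≤ a * Real.logb 2 (a / (w * a + (1 - w) * b)) := by
  have hab : 0 < a + b := by linarith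
  have hm : 0 < (1/2) * a + (1/2) * b := by linarith
  set d := w * a + (1 - w) * b with hdd
  set m := (1/2) * a + (1/2) * b with hmm
  have hlog2 : 0 < Real.log 2 := Real.log_pos (by norm_num)
  have key : Real.log d - Real.log m ≤ (d - m) / m := by
    have h1 := Real.log_le_sub_one_of_pos (div_pos hd hm)
    rw [Real.log_div hd.ne' hm.ne'] at h1
    rw [div_sub_one hm.ne'] at h1
    linarith
  have key2 : (Real.log d - Real.log m) * m ≤ d - m := (le_div_iff₀ hm).1 key
  have hm2 : a + b = 2 * m := by rw [hmm]; ring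
  have hdm : d - m = (w - 1/2) * (a - b) := by rw [hdd, hmm]; ring
  clear_value d m
  have key3 : 2 * (w - 1/2) * (b - a) ≤ (Real.log m - Real.log d) * (a + b) := by
    have h4 : (Real.log m - Real.log d) * (a + b) = -2 * ((Real.log d - Real.log m) * m) := by
      rw [hm2]; ring
    have h5 : 2 * (w - 1/2) * (b - a) = -2 * ((w - 1/2) * (a - b)) := by ring
    rw [h4, h5]; linarith
  have expand : a * Real.logb 2 (a / d) -
      (a * Real.logb 2 (a / m) + a * (b - a) / (a + b) * (2 / Real.log 2) * (w - 1/2))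
      = a * ((Real.log m - Real.log d) * (a + b) - 2 * (w - 1/2) * (b - a)) / ((a + b) * Real.log 2) := by
    rw [Real.logb, Real.logb, Real.log_div ha.ne' hm.ne', Real.log_div ha.ne' hd.ne']
    field_simp
    ring
  have hnn : 0 ≤ a * ((Real.log m - Real.log d) * (a + b) - 2 * (w - 1/2) * (b - a)) / ((a + b) * Real.log 2) :=
    div_nonneg (mul_nonneg ha.le (by linarith)) (le_of_lt (mul_pos hab hlog2))
  linarith [expand, hnn]

lemma kl_tangent {Y : Type*} [Fintype Y] (P0 P1 : Y → ℝ)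
    (hP00 : ∀ y, 0 ≤ P0 y) (hP10 : ∀ y, 0 ≤ P1 y)
    (w : ℝ) (hw0 : 0 ≤ w) (hw1 : w ≤ 1) :
    ((Gc P0 P1 + cslope P0 P1 * (w - 1/2) : ℝ) : EReal)
      ≤ KL P0 (fun y => w * P0 y + (1 - w) * P1 y) := by
  by_cases hbad : ∃ y, P0 y ≠ 0 ∧ w * P0 y + (1 - w) * P1 y = 0
  · obtain ⟨y0, hy0, hmix⟩ := hbad
    have : KL P0 (fun y => w * P0 y + (1 - w) * P1 y) = ⊤ := by
      rw [KL]
      refine ereal_sum_eq_top_s17 _ _ (fun y _ => ?_) (Finset.mem_univ y0)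
        (by rw [if_neg hy0, if_pos hmix])
      split_ifs
      · simp
      · simp
      · exact EReal.coe_ne_bot _
    rw [this]; exact le_top
  · push_neg at hbad
    rw [KL_eq_coe_s17 _ _ hbad, EReal.coe_le_coe_iff]
    rw [Gc, cslope, Finset.sum_mul, ← Finset.sum_add_distrib]
    refine Finset.sum_le_sum fun y _ => ?_
    by_cases hy : P0 y = 0
    · simp [hy]
    · rw [if_neg hy, if_neg hy]
      have ha : 0 < P0 y := lt_of_le_of_ne (hP00 y) (Ne.symm hy)
      have hd0 : 0 ≤ w * P0 y + (1 - w) * P1 y :=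
        add_nonneg (mul_nonneg hw0 (hP00 y)) (mul_nonneg (sub_nonneg.2 hw1) (hP10 y))
      have hd : 0 < w * P0 y + (1 - w) * P1 y := lt_of_le_of_ne hd0 (Ne.symm (hbad y hy))
      exact tangent_pt (P0 y) (P1 y) w ha (hP10 y) hw0 hw1 hd


lemma kl_swap {Y : Type*} [Fintype Y] (P0 P1 : Y → ℝ) (f : Y → Y)
    (hf : Function.Involutive f) (hsym : ∀ y, P0 y = P1 (f y)) (w : ℝ) :
    KL P1 (fun y => w * P0 y + (1 - w) * P1 y)
      = KL P0 (fun y => (1 - w) * P0 y + w * P1 y) := by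
  rw [KL, KL]
  refine Fintype.sum_equiv (hf.toPerm) _ _ fun y => ?_
  have h1 : P0 (f y) = P1 y := by rw [hsym (f y), hf y]
  have h2 : P1 (f y) = P0 y := (hsym y).symm
  have he : (hf.toPerm : Y → Y) y = f y := rfl
  rw [he, h1, h2]
  have h3 : (1 - w) * P1 y + w * P0 y = w * P0 y + (1 - w) * P1 y := by ring
  rw [h3]

lemma cslope_nonpos {Y : Type*} [Fintype Y] (P0 P1 : Y → ℝ)
    (h0 : ∀ y, 0 ≤ P0 y) (h1 : ∀ y, 0 ≤ P1 y)
    (hs0 : ∑ y, P0 y = 1) (hs1 : ∑ y, P1 y = 1) : cslope P0 P1 ≤ 0 := by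
  have hlog2 : 0 < Real.log 2 := Real.log_pos (by norm_num)
  have step : cslope P0 P1 ≤ ∑ y, (P1 y - P0 y) / Real.log 2 := by
    rw [cslope]
    refine Finset.sum_le_sum fun y _ => ?_
    rcases eq_or_lt_of_le (add_nonneg (h0 y) (h1 y)) with hab | hab
    · have hP0 : P0 y = 0 := by nlinarith [h0 y, h1 y]
      have hP1 : P1 y = 0 := by nlinarith [h0 y, h1 y]
      simp [hP0, hP1]
    · have e1 : P0 y * (P1 y - P0 y) / (P0 y + P1 y) * (2 / Real.log 2)
          = (P0 y * (P1 y - P0 y) / (P0 y + P1 y) * 2) / Real.log 2 := by ring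
      rw [e1, div_le_div_iff_of_pos_right hlog2]
      have hid : (P1 y - P0 y) - P0 y * (P1 y - P0 y) / (P0 y + P1 y) * 2
          = (P1 y - P0 y)^2 / (P0 y + P1 y) := by
        field_simp
        ring
      have := div_nonneg (sq_nonneg (P1 y - P0 y)) (le_of_lt hab)
      linarith
  have : ∑ y, (P1 y - P0 y) / Real.log 2 = 0 := by
    rw [← Finset.sum_div, Finset.sum_sub_distrib, hs1, hs0]
    simp
  linarith

lemma mix_eq {Y : Type*} {M : ℕ} (ρ : Fin M → ℝ) (hρ1 : ∑ j, ρ j = 1)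
    (p : Fin M → Prop) [DecidablePred p] (P0 P1 : Y → ℝ) (i : Fin M) :
    (fun y => ∑ j ∈ univ.erase i, (ρ j / (1 - ρ i)) * (if p j then P0 else P1) y)
      = fun y => (((∑ j ∈ univ.filter p, ρ j) - if p i then ρ i else 0) / (1 - ρ i)) * P0 y
          + ((1 - (∑ j ∈ univ.filter p, ρ j) - if p i then 0 else ρ i) / (1 - ρ i)) * P1 y := by
  classical
  funext y
  have e1 : ∀ j, (ρ j / (1 - ρ i)) * (if p j then P0 else P1) y
      = if p j then (ρ j / (1 - ρ i)) * P0 y else (ρ j / (1 - ρ i)) * P1 y := by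
    intro j; split_ifs <;> rfl
  rw [Finset.sum_congr rfl fun j _ => e1 j, Finset.sum_ite, ← Finset.sum_mul, ← Finset.sum_mul,
    ← Finset.sum_div, ← Finset.sum_div]
  have cA : ∑ j ∈ (univ.erase i).filter p, ρ j
      = (∑ j ∈ univ.filter p, ρ j) - (if p i then ρ i else 0) := by
    rw [Finset.filter_erase]
    by_cases hpi : p i
    · rw [if_pos hpi, Finset.sum_erase_eq_sub (Finset.mem_filter.2 ⟨Finset.mem_univ i, hpi⟩)]
    · rw [if_neg hpi, Finset.erase_eq_of_notMem (fun hmem => hpi (Finset.mem_filter.1 hmem).2),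
        sub_zero]
  have hnot : ∑ j ∈ univ.filter (fun j => ¬ p j), ρ j = 1 - ∑ j ∈ univ.filter p, ρ j := by
    have := Finset.sum_filter_add_sum_filter_not univ p ρ
    linarith [this.trans hρ1]
  have cB : ∑ j ∈ (univ.erase i).filter (fun j => ¬ p j), ρ j
      = 1 - (∑ j ∈ univ.filter p, ρ j) - (if p i then 0 else ρ i) := by
    rw [Finset.filter_erase]
    by_cases hpi : p i
    · rw [if_pos hpi, Finset.erase_eq_of_notMem
        (by simp [hpi]), hnot, sub_zero]
    · rw [if_neg hpi, Finset.sum_erase_eq_sub (Finset.mem_filter.2 ⟨Finset.mem_univ i, hpi⟩), hnot]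
  rw [cA, cB]
lemma ejs_lower {Y : Type*} [Fintype Y] {M : ℕ} (P0 P1 : Y → ℝ)
    (hP00 : ∀ y, 0 ≤ P0 y) (hP10 : ∀ y, 0 ≤ P1 y)
    (f : Y → Y) (hf : Function.Involutive f) (hsym : ∀ y, P0 y = P1 (f y))
    (ρ : Fin M → ℝ) (hρpos : ∀ i, 0 < ρ i) (hρ1 : ∑ i, ρ i = 1) (hρlt : ∀ i, ρ i < 1)
    (p : Fin M → Prop) [DecidablePred p] :
    ((∑ i, ρ i * (Gc P0 P1 + cslope P0 P1 *
        ((((if p i then (∑ j ∈ univ.filter p, ρ j) else 1 - ∑ j ∈ univ.filter p, ρ j) - ρ i)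
          / (1 - ρ i)) - 1/2)) : ℝ) : EReal)
      ≤ EJS ρ (fun i => if p i then P0 else P1) := by
  classical
  rw [EJS, ereal_coe_sum]
  refine Finset.sum_le_sum fun i _ => ?_
  have hρi := hρpos i
  have hρi1 := hρlt i
  have h1i : 0 < 1 - ρ i := by linarith
  have hS0 : 0 ≤ ∑ j ∈ univ.filter p, ρ j := Finset.sum_nonneg fun j _ => (hρpos j).le
  have hS1 : (∑ j ∈ univ.filter p, ρ j) ≤ 1 := by
    rw [← hρ1]
    exact Finset.sum_le_sum_of_subset_of_nonneg (Finset.filter_subset _ _)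
      (fun j _ _ => (hρpos j).le)
  set S := ∑ j ∈ univ.filter p, ρ j with hS
  set q : ℝ := ((if p i then S else 1 - S) - ρ i) / (1 - ρ i) with hq
  refine ereal_coe_mul_le hρi.le ?_
  rw [mix_eq ρ hρ1 p P0 P1 i]
  by_cases hpi : p i
  · have hmem : i ∈ univ.filter p := Finset.mem_filter.2 ⟨Finset.mem_univ i, hpi⟩
    have hρS : ρ i ≤ S := Finset.single_le_sum (fun j _ => (hρpos j).le) hmem
    have hq0 : 0 ≤ q := by
      rw [hq, if_pos hpi]; exact div_nonneg (by linarith) h1i.le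
    have hq1 : q ≤ 1 := by
      rw [hq, if_pos hpi, div_le_one h1i]; linarith
    have hfun : (fun y => ((S - if p i then ρ i else 0) / (1 - ρ i)) * P0 y
        + ((1 - S - if p i then 0 else ρ i) / (1 - ρ i)) * P1 y)
        = fun y => q * P0 y + (1 - q) * P1 y := by
      funext y
      rw [if_pos hpi, if_pos hpi, hq, if_pos hpi]
      have : (1 - S - 0) / (1 - ρ i) = 1 - (S - ρ i) / (1 - ρ i) := by
        field_simp
        ring
      rw [this]
    rw [if_pos hpi, hfun]
    exact kl_tangent P0 P1 hP00 hP10 q hq0 hq1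
  · have hmem : i ∈ univ.filter (fun j => ¬ p j) := by simp [hpi]
    have hρS : ρ i ≤ 1 - S := by
      have hnot : ∑ j ∈ univ.filter (fun j => ¬ p j), ρ j = 1 - S := by
        have := Finset.sum_filter_add_sum_filter_not univ p ρ
        rw [hρ1] at this; rw [hS]; linarith
      rw [← hnot]
      exact Finset.single_le_sum (fun j _ => (hρpos j).le) hmem
    have hq0 : 0 ≤ q := by
      rw [hq, if_neg hpi]; exact div_nonneg (by linarith) h1i.le
    have hq1 : q ≤ 1 := by
      rw [hq, if_neg hpi, div_le_one h1i]; linarith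
    have hfun : (fun y => ((S - if p i then ρ i else 0) / (1 - ρ i)) * P0 y
        + ((1 - S - if p i then 0 else ρ i) / (1 - ρ i)) * P1 y)
        = fun y => (1 - q) * P0 y + (1 - (1 - q)) * P1 y := by
      funext y
      rw [if_neg hpi, if_neg hpi, hq, if_neg hpi]
      have h1i' : (1 - ρ i) ≠ 0 := ne_of_gt h1i
      rw [one_sub_div h1i', one_sub_div h1i']
      ring_nf
    rw [if_neg hpi, hfun, kl_swap P0 P1 f hf hsym (1 - q)]
    have hfun2 : (fun y => (1 - (1 - q)) * P0 y + (1 - q) * P1 y)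
        = fun y => q * P0 y + (1 - q) * P1 y := by
      funext y; ring_nf
    rw [hfun2]
    exact kl_tangent P0 P1 hP00 hP10 q hq0 hq1
set_option maxHeartbeats 2000000 in
lemma comb {M : ℕ} (ρ : Fin M → ℝ) (hρpos : ∀ i, 0 < ρ i) (hρ1 : ∑ i, ρ i = 1)
    (hρlt : ∀ i, ρ i < 1)
    (σp Λp : Fin M → Prop) [DecidablePred σp] [DecidablePred Λp]
    (t : Fin M) (hsub : ∀ i, σp i → Λp i) (hσt : ¬ σp t) (hΛt : Λp t)
    (hdiff : ∀ i, Λp i → ¬ σp i → i = t)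
    (dσ dΛ : ℝ) (hdσ0 : 0 ≤ dσ) (hdΛ0 : 0 ≤ dΛ)
    (hσs : ∑ i ∈ univ.filter σp, ρ i = 1/2 - dσ)
    (hΛs : ∑ i ∈ univ.filter Λp, ρ i = 1/2 + dΛ)
    (μ : ℝ) (hμ0 : 0 ≤ μ) (hμ1 : μ ≤ 1)
    (hsgn1 : (dΛ - dσ) * (μ * dΛ - (1 - μ) * dσ) ≤ 0)
    (hsgn2 : (dΛ - dσ) * (μ - 1/2) ≤ 0) :
    μ * (∑ i, ρ i * (((if Λp i then 1/2 + dΛ else 1 - (1/2 + dΛ)) - ρ i) / (1 - ρ i)))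
      + (1 - μ) * (∑ i, ρ i * (((if σp i then 1/2 - dσ else 1 - (1/2 - dσ)) - ρ i) / (1 - ρ i)))
      ≤ 1/2 := by
  classical
  obtain ⟨ε, hε⟩ : ∃ x : ℝ, x = μ * dΛ - (1 - μ) * dσ := ⟨_, rfl⟩
  rw [← hε] at hsgn1
  have hdΛhalf : dΛ ≤ 1/2 := by
    have h1 : ∑ i ∈ univ.filter Λp, ρ i ≤ 1 := by
      rw [← hρ1]
      exact Finset.sum_le_sum_of_subset_of_nonneg (Finset.filter_subset _ _)
        (fun j _ _ => (hρpos j).le)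
    linarith [hΛs ▸ h1]
  have hdσhalf : dσ ≤ 1/2 := by
    have h1 : 0 ≤ ∑ i ∈ univ.filter σp, ρ i := Finset.sum_nonneg fun j _ => (hρpos j).le
    linarith [hσs ▸ h1]
  have hεle : ε ≤ 1/2 := by nlinarith
  have hεge : -(1/2) ≤ ε := by nlinarith
  have hins : univ.filter Λp = insert t (univ.filter σp) := by
    ext i
    simp only [Finset.mem_filter, Finset.mem_univ, true_and, Finset.mem_insert]
    constructor
    · intro hΛi
      by_cases hσi : σp i
      · exact Or.inr hσi
      · exact Or.inl (hdiff i hΛi hσi)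
    · rintro (rfl | hσi)
      · exact hΛt
      · exact hsub i hσi
  have htns : t ∉ univ.filter σp := by simp [hσt]
  have hρt : ρ t = dσ + dΛ := by
    have := hins ▸ hΛs
    rw [Finset.sum_insert htns, hσs] at this
    linarith
  obtain ⟨Kp, hKp⟩ : ∃ x : ℝ, x = (μ - 1/2) * (dΛ - dσ) := ⟨_, rfl⟩
  have hKple : Kp ≤ 0 := by rw [hKp]; nlinarith
  obtain ⟨K, hK⟩ : ∃ x : ℝ, x = (dσ + dΛ) * Kp := ⟨_, rfl⟩
  have hKle : K ≤ 0 := by rw [hK]; exact mul_nonpos_of_nonneg_of_nonpos (by linarith) hKple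
  obtain ⟨bnd, hbnd⟩ : ∃ g : Fin M → ℝ,
      g = fun i => if σp i then ρ i * ε else if Λp i then K else -(ρ i * ε) := ⟨_, rfl⟩
  have hsumbnd : ∑ i, bnd i ≤ 0 := by
    rw [← Finset.sum_filter_add_sum_filter_not univ σp bnd]
    have e1 : ∑ i ∈ univ.filter σp, bnd i = (1/2 - dσ) * ε := by
      rw [← hσs, Finset.sum_mul]
      refine Finset.sum_congr rfl fun i hi => ?_
      rw [hbnd]
      simp only [(Finset.mem_filter.1 hi).2, if_pos]
    have e2 : ∑ i ∈ univ.filter (fun i => ¬ σp i), bnd i = K - (1/2 - dΛ) * ε := by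
      rw [← Finset.sum_filter_add_sum_filter_not (univ.filter (fun i => ¬ σp i)) Λp bnd]
      have eA : (univ.filter (fun i => ¬ σp i)).filter Λp = {t} := by
        rw [Finset.filter_filter]
        ext i
        simp only [Finset.mem_filter, Finset.mem_univ, true_and, Finset.mem_singleton]
        constructor
        · rintro ⟨hσi, hΛi⟩; exact hdiff i hΛi hσi
        · rintro rfl; exact ⟨hσt, hΛt⟩
      have eB : (univ.filter (fun i => ¬ σp i)).filter (fun i => ¬ Λp i)
          = univ.filter (fun i => ¬ Λp i) := by
        rw [Finset.filter_filter]
        ext i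
        simp only [Finset.mem_filter, Finset.mem_univ, true_and]
        exact ⟨fun h => h.2, fun h => ⟨fun hσi => h (hsub i hσi), h⟩⟩
      have hBs : ∑ i ∈ univ.filter (fun i => ¬ Λp i), ρ i = 1/2 - dΛ := by
        have := Finset.sum_filter_add_sum_filter_not univ Λp ρ
        rw [hρ1, hΛs] at this
        linarith
      rw [eA, eB, Finset.sum_singleton]
      have ebt : bnd t = K := by rw [hbnd]; simp [hσt, hΛt]
      have ebB : ∑ i ∈ univ.filter (fun i => ¬ Λp i), bnd i = -((1/2 - dΛ) * ε) := by
        rw [← hBs, Finset.sum_mul, ← Finset.sum_neg_distrib]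
        refine Finset.sum_congr rfl fun i hi => ?_
        have hΛi : ¬ Λp i := (Finset.mem_filter.1 hi).2
        have hσi : ¬ σp i := fun h => hΛi (hsub i h)
        rw [hbnd]
        simp only [hσi, hΛi, if_neg, if_false]
      rw [ebt, ebB]
      ring
    rw [e1, e2]
    nlinarith
  have main : ∀ i, μ * (ρ i * (((if Λp i then 1/2 + dΛ else 1 - (1/2 + dΛ)) - ρ i) / (1 - ρ i)))
      + (1 - μ) * (ρ i * (((if σp i then 1/2 - dσ else 1 - (1/2 - dσ)) - ρ i) / (1 - ρ i)))
      ≤ ρ i / 2 + bnd i := by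
    intro i
    have h1i : (0:ℝ) < 1 - ρ i := by linarith [hρlt i]
    have hρi := hρpos i
    by_cases hσi : σp i
    · have hΛi : Λp i := hsub i hσi
      rw [if_pos hσi, if_pos hΛi]
      have hnum : μ * ((1/2 + dΛ) - ρ i) + (1 - μ) * ((1/2 - dσ) - ρ i)
          = 1/2 + ε - ρ i := by rw [hε]; ring
      have ecombo : μ * (((1/2 + dΛ) - ρ i) / (1 - ρ i)) + (1 - μ) * (((1/2 - dσ) - ρ i) / (1 - ρ i))
          = (1/2 + ε - ρ i) / (1 - ρ i) := by
        rw [← mul_div_assoc, ← mul_div_assoc, ← add_div, hnum]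
      have hle : (1/2 + ε - ρ i) / (1 - ρ i) ≤ 1/2 + ε := by
        rw [div_le_iff₀ h1i]; nlinarith
      have e3 : μ * (ρ i * (((1/2 + dΛ) - ρ i) / (1 - ρ i)))
          + (1 - μ) * (ρ i * (((1/2 - dσ) - ρ i) / (1 - ρ i)))
          = ρ i * (μ * (((1/2 + dΛ) - ρ i) / (1 - ρ i)) + (1 - μ) * (((1/2 - dσ) - ρ i) / (1 - ρ i))) := by
        ring
      rw [e3, ecombo]
      have : ρ i * ((1/2 + ε - ρ i) / (1 - ρ i)) ≤ ρ i * (1/2 + ε) :=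
        mul_le_mul_of_nonneg_left hle hρi.le
      have hb : bnd i = ρ i * ε := by rw [hbnd]; simp [hσi]
      rw [hb]; linarith
    · by_cases hΛi : Λp i
      · have hit : i = t := hdiff i hΛi hσi
        subst hit
        rw [if_pos hΛi, if_neg hσi]
        have hnum : μ * ((1/2 + dΛ) - ρ i) + (1 - μ) * (1 - (1/2 - dσ) - ρ i)
            = 1/2 + (Kp + ρ i / 2) - ρ i := by rw [hKp, hρt]; ring
        have ecombo : μ * (((1/2 + dΛ) - ρ i) / (1 - ρ i))
            + (1 - μ) * ((1 - (1/2 - dσ) - ρ i) / (1 - ρ i))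
            = (1/2 + (Kp + ρ i / 2) - ρ i) / (1 - ρ i) := by
          rw [← mul_div_assoc, ← mul_div_assoc, ← add_div, hnum]
        have hle : (1/2 + (Kp + ρ i / 2) - ρ i) / (1 - ρ i) ≤ 1/2 + Kp := by
          rw [div_le_iff₀ h1i]
          have : Kp * ρ i ≤ 0 := mul_nonpos_of_nonpos_of_nonneg hKple hρi.le
          nlinarith
        have e3 : μ * (ρ i * (((1/2 + dΛ) - ρ i) / (1 - ρ i)))
            + (1 - μ) * (ρ i * ((1 - (1/2 - dσ) - ρ i) / (1 - ρ i)))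
            = ρ i * (μ * (((1/2 + dΛ) - ρ i) / (1 - ρ i))
              + (1 - μ) * ((1 - (1/2 - dσ) - ρ i) / (1 - ρ i))) := by
          ring
        rw [e3, ecombo]
        have h4 : ρ i * ((1/2 + (Kp + ρ i / 2) - ρ i) / (1 - ρ i)) ≤ ρ i * (1/2 + Kp) :=
          mul_le_mul_of_nonneg_left hle hρi.le
        have hb : bnd i = K := by rw [hbnd]; simp [hσi, hΛi]
        have h5 : ρ i * (1/2 + Kp) = ρ i / 2 + K := by rw [hK, ← hρt]; ring
        rw [hb]; linarith
      · rw [if_neg hσi, if_neg hΛi]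
        have hnum : μ * (1 - (1/2 + dΛ) - ρ i) + (1 - μ) * (1 - (1/2 - dσ) - ρ i)
            = 1/2 - ε - ρ i := by rw [hε]; ring
        have ecombo : μ * ((1 - (1/2 + dΛ) - ρ i) / (1 - ρ i))
            + (1 - μ) * ((1 - (1/2 - dσ) - ρ i) / (1 - ρ i))
            = (1/2 - ε - ρ i) / (1 - ρ i) := by
          rw [← mul_div_assoc, ← mul_div_assoc, ← add_div, hnum]
        have hle : (1/2 - ε - ρ i) / (1 - ρ i) ≤ 1/2 - ε := by
          rw [div_le_iff₀ h1i]; nlinarith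
        have e3 : μ * (ρ i * ((1 - (1/2 + dΛ) - ρ i) / (1 - ρ i)))
            + (1 - μ) * (ρ i * ((1 - (1/2 - dσ) - ρ i) / (1 - ρ i)))
            = ρ i * (μ * ((1 - (1/2 + dΛ) - ρ i) / (1 - ρ i))
              + (1 - μ) * ((1 - (1/2 - dσ) - ρ i) / (1 - ρ i))) := by
          ring
        rw [e3, ecombo]
        have h4 : ρ i * ((1/2 - ε - ρ i) / (1 - ρ i)) ≤ ρ i * (1/2 - ε) :=
          mul_le_mul_of_nonneg_left hle hρi.le
        have hb : bnd i = -(ρ i * ε) := by rw [hbnd]; simp [hσi, hΛi]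
        rw [hb]; nlinarith
  calc μ * (∑ i, ρ i * (((if Λp i then 1/2 + dΛ else 1 - (1/2 + dΛ)) - ρ i) / (1 - ρ i)))
      + (1 - μ) * (∑ i, ρ i * (((if σp i then 1/2 - dσ else 1 - (1/2 - dσ)) - ρ i) / (1 - ρ i)))
      = ∑ i, (μ * (ρ i * (((if Λp i then 1/2 + dΛ else 1 - (1/2 + dΛ)) - ρ i) / (1 - ρ i)))
        + (1 - μ) * (ρ i * (((if σp i then 1/2 - dσ else 1 - (1/2 - dσ)) - ρ i) / (1 - ρ i)))) := by
        rw [Finset.mul_sum, Finset.mul_sum, ← Finset.sum_add_distrib]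
    _ ≤ ∑ i, (ρ i / 2 + bnd i) := Finset.sum_le_sum fun i _ => main i
    _ = (∑ i, ρ i) / 2 + ∑ i, bnd i := by rw [Finset.sum_add_distrib, ← Finset.sum_div]
    _ ≤ 1/2 := by rw [hρ1]; linarith
set_option maxHeartbeats 2000000 in
/-- Corollary 5 (randomized Horstein–Burnashev–Zigangirov-type schemes): for a symmetric
binary-input channel, any randomization between the threshold encodings at `k*` and
`k*₂ = k* − sign(s − 1/2)` that puts weight `λ ≥ δ₂/(δ₁+δ₂)` on the former obtains expected
EJS divergence at least `D(P₀ ‖ ½P₀ + ½P₁)`. -/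
theorem randomized_ghbz_ejs_ge_capacity
    {Y : Type*} [Fintype Y]
    (P0 P1 : Y → ℝ)
    (hP00 : ∀ y, 0 ≤ P0 y) (hP01 : ∑ y, P0 y = 1)
    (hP10 : ∀ y, 0 ≤ P1 y) (hP11 : ∑ y, P1 y = 1)
    (f : Y → Y) (hf : Function.Involutive f)
    (hsym : ∀ y, P0 y = P1 (f y))
    (M : ℕ) (hM : 2 ≤ M)
    (ρ : Fin M → ℝ) (hρpos : ∀ i, 0 < ρ i) (hρ1 : ∑ i, ρ i = 1)
    (hρlt : ∀ i, ρ i < 1)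
    (kstar : ℕ) (hk1 : 1 ≤ kstar) (hkM : kstar ≤ M)
    (hkmin : ∀ k : ℕ, 1 ≤ k → k ≤ M →
      |(∑ i ∈ univ.filter (fun i : Fin M => (i : ℕ) < kstar), ρ i) - 1 / 2|
        ≤ |(∑ i ∈ univ.filter (fun i : Fin M => (i : ℕ) < k), ρ i) - 1 / 2|)
    (s : ℝ) (hs : s = ∑ i ∈ univ.filter (fun i : Fin M => (i : ℕ) < kstar), ρ i)
    (hshalf : s ≠ 1 / 2)
    (kstar2 : ℕ)
    (hk2 : kstar2 = if 1 / 2 < s then kstar - 1 else kstar + 1)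
    (δ₁ δ₂ : ℝ)
    (hδ₁ : δ₁ = |s - 1 / 2|)
    (hδ₂ : δ₂ = |(∑ i ∈ univ.filter (fun i : Fin M => (i : ℕ) < kstar2), ρ i) - 1 / 2|)
    (l : ℝ) (hl1 : δ₂ / (δ₁ + δ₂) ≤ l) (hl2 : l ≤ 1) :
    KL P0 (fun y => (1 / 2) * P0 y + (1 / 2) * P1 y)
      ≤ ((l : ℝ) : EReal) * EJS ρ (fun i => if (i : ℕ) < kstar then P0 else P1)
        + ((1 - l : ℝ) : EReal) * EJS ρ (fun i => if (i : ℕ) < kstar2 then P0 else P1) := by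
  classical
  have hδ₁0 : 0 ≤ δ₁ := hδ₁ ▸ abs_nonneg _
  have hδ₂0 : 0 ≤ δ₂ := hδ₂ ▸ abs_nonneg _
  have hl0 : 0 ≤ l := le_trans (div_nonneg hδ₂0 (by linarith)) hl1
  -- abbreviations
  set S1 : ℝ := ∑ i ∈ univ.filter (fun i : Fin M => (i : ℕ) < kstar), ρ i with hS1
  set S2 : ℝ := ∑ i ∈ univ.filter (fun i : Fin M => (i : ℕ) < kstar2), ρ i with hS2
  have hS1le : S1 ≤ 1 := by
    rw [hS1, ← hρ1]
    exact Finset.sum_le_sum_of_subset_of_nonneg (Finset.filter_subset _ _)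
      (fun j _ _ => (hρpos j).le)
  have hS2le1 : S2 ≤ 1 := by
    rw [hS2, ← hρ1]
    exact Finset.sum_le_sum_of_subset_of_nonneg (Finset.filter_subset _ _)
      (fun j _ _ => (hρpos j).le)
  have hS20 : 0 ≤ S2 := Finset.sum_nonneg fun j _ => (hρpos j).le
  -- the combinatorial inequality
  have hcomb : l * (∑ i, ρ i * (((if (i : ℕ) < kstar then S1 else 1 - S1) - ρ i) / (1 - ρ i)))
      + (1 - l) * (∑ i, ρ i * (((if (i : ℕ) < kstar2 then S2 else 1 - S2) - ρ i) / (1 - ρ i)))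
      ≤ 1/2 := by
    by_cases hcase : 1/2 < s
    · -- kstar2 = kstar - 1
      have ht2 : kstar2 = kstar - 1 := by rw [hk2, if_pos hcase]
      have htlt : kstar - 1 < M := by omega
      set t : Fin M := ⟨kstar - 1, htlt⟩ with htdef
      have hfilter : univ.filter (fun i : Fin M => (i : ℕ) < kstar)
          = insert t (univ.filter (fun i : Fin M => (i : ℕ) < kstar2)) := by
        ext i
        simp only [Finset.mem_filter, Finset.mem_univ, true_and, Finset.mem_insert,
          htdef, Fin.ext_iff]
        omega
      have htnot : t ∉ univ.filter (fun i : Fin M => (i : ℕ) < kstar2) := by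
        simp only [Finset.mem_filter, Finset.mem_univ, true_and, htdef]
        omega
      have hρt : ρ t = S1 - S2 := by
        have := hfilter ▸ hS1
        rw [Finset.sum_insert htnot, ← hS2] at this
        linarith
      have hS2half : S2 ≤ 1/2 := by
        by_contra hgt
        push_neg at hgt
        rcases Nat.eq_zero_or_pos kstar2 with h0 | h0
        · have : S2 = 0 := by
            rw [hS2, Finset.filter_false_of_mem (fun i _ => by omega), Finset.sum_empty]
          linarith
        · have hmin := hkmin kstar2 h0 (by omega)
          rw [← hs, ← hS2] at hmin
          rw [abs_of_pos (by linarith), abs_of_pos (by linarith)] at hmin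
          have : ρ t ≤ 0 := by linarith [hρt]
          linarith [hρpos t]
      have hδ₁' : δ₁ = s - 1/2 := by rw [hδ₁, abs_of_pos (by linarith)]
      have hδ₂' : δ₂ = 1/2 - S2 := by
        rw [hδ₂, abs_of_nonpos (by linarith)]; ring
      have hS1eq : S1 = 1/2 + δ₁ := by rw [hδ₁', hs]; ring
      have hS2eq : S2 = 1/2 - δ₂ := by rw [hδ₂']; ring
      have hρt' : ρ t = δ₁ + δ₂ := by rw [hρt, hS1eq, hS2eq]; ring
      have hsum_pos : 0 < δ₁ + δ₂ := hρt' ▸ hρpos t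
      have hd12 : δ₁ ≤ δ₂ := by
        rcases Nat.eq_zero_or_pos kstar2 with h0 | h0
        · have h00 : S2 = 0 := by
            rw [hS2, Finset.filter_false_of_mem (fun i _ => by omega), Finset.sum_empty]
          rw [hδ₁', hδ₂', h00]
          linarith [hS1le]
        · have hmin := hkmin kstar2 h0 (by omega)
          rw [← hs, ← hS2] at hmin
          rw [hδ₁, hδ₂]
          exact hmin
      have hεpos : 0 ≤ l * δ₁ - (1 - l) * δ₂ := by
        rw [div_le_iff₀ hsum_pos] at hl1
        nlinarith
      have hlhalf : 1/2 ≤ l := by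
        rw [div_le_iff₀ hsum_pos] at hl1
        nlinarith
      have := comb ρ hρpos hρ1 hρlt (fun i => (i : ℕ) < kstar2) (fun i => (i : ℕ) < kstar) t
        (fun i hi => by omega)
        (by simp only [htdef]; omega) (by simp only [htdef]; omega)
        (fun i hΛ hσ => by
          apply Fin.ext
          simp only [htdef]
          omega)
        δ₂ δ₁ hδ₂0 hδ₁0
        (by rw [← hS2, hS2eq]) (by rw [← hS1, hS1eq])
        l hl0 hl2
        (by nlinarith) (by nlinarith)
      rw [hS1eq, hS2eq]
      exact this
    · -- kstar2 = kstar + 1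
      have hslt : s < 1/2 := lt_of_le_of_ne (not_lt.1 hcase) hshalf
      have ht2 : kstar2 = kstar + 1 := by rw [hk2, if_neg hcase]
      have hkM' : kstar < M := by
        by_contra hge
        have hk : kstar = M := by omega
        have : S1 = 1 := by
          rw [hS1, ← hρ1]
          congr 1
          apply Finset.filter_true_of_mem
          intro i _
          omega
        rw [hs] at hslt
        linarith
      set t : Fin M := ⟨kstar, hkM'⟩ with htdef
      have hfilter : univ.filter (fun i : Fin M => (i : ℕ) < kstar2)
          = insert t (univ.filter (fun i : Fin M => (i : ℕ) < kstar)) := by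
        ext i
        simp only [Finset.mem_filter, Finset.mem_univ, true_and, Finset.mem_insert,
          htdef, Fin.ext_iff]
        omega
      have htnot : t ∉ univ.filter (fun i : Fin M => (i : ℕ) < kstar) := by
        simp only [Finset.mem_filter, Finset.mem_univ, true_and, htdef]
        omega
      have hρt : ρ t = S2 - S1 := by
        have := hfilter ▸ hS2
        rw [Finset.sum_insert htnot, ← hS1] at this
        linarith
      have hS2half : 1/2 ≤ S2 := by
        by_contra hgt
        push_neg at hgt
        have hmin := hkmin kstar2 (by omega) (by omega)
        rw [← hs, ← hS2] at hmin
        rw [abs_of_neg (by rw [hs] at hslt ⊢; linarith), abs_of_neg (by linarith)] at hmin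
        have : ρ t ≤ 0 := by linarith [hρt]
        linarith [hρpos t]
      have hδ₁' : δ₁ = 1/2 - s := by rw [hδ₁, abs_of_nonpos (by linarith)]; ring
      have hδ₂' : δ₂ = S2 - 1/2 := by
        rw [hδ₂, abs_of_nonneg (by linarith)]
      have hS1eq : S1 = 1/2 - δ₁ := by rw [hδ₁', hs]; ring
      have hS2eq : S2 = 1/2 + δ₂ := by rw [hδ₂']; ring
      have hρt' : ρ t = δ₁ + δ₂ := by rw [hρt, hS1eq, hS2eq]; ring
      have hsum_pos : 0 < δ₁ + δ₂ := hρt' ▸ hρpos t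
      have hd12 : δ₁ ≤ δ₂ := by
        have hmin := hkmin kstar2 (by omega) (by omega)
        rw [← hs, ← hS2] at hmin
        rw [hδ₁, hδ₂]
        exact hmin
      have hεpos : 0 ≤ l * δ₁ - (1 - l) * δ₂ := by
        rw [div_le_iff₀ hsum_pos] at hl1
        nlinarith
      have hlhalf : 1/2 ≤ l := by
        rw [div_le_iff₀ hsum_pos] at hl1
        nlinarith
      have := comb ρ hρpos hρ1 hρlt (fun i => (i : ℕ) < kstar) (fun i => (i : ℕ) < kstar2) t
        (fun i hi => by omega)
        (by simp only [htdef]; omega) (by simp only [htdef]; omega)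
        (fun i hΛ hσ => by
          apply Fin.ext
          simp only [htdef]
          omega)
        δ₁ δ₂ hδ₁0 hδ₂0
        (by rw [← hS1, hS1eq]) (by rw [← hS2, hS2eq])
        (1 - l) (by linarith) (by linarith)
        (by nlinarith) (by nlinarith)
      rw [hS1eq, hS2eq]
      linarith [this]
  -- generalized quotient functions
  obtain ⟨x1, hx1⟩ : ∃ g : Fin M → ℝ,
      g = fun i : Fin M => ((if (i : ℕ) < kstar then S1 else 1 - S1) - ρ i) / (1 - ρ i) := ⟨_, rfl⟩
  obtain ⟨x2, hx2⟩ : ∃ g : Fin M → ℝ,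
      g = fun i : Fin M => ((if (i : ℕ) < kstar2 then S2 else 1 - S2) - ρ i) / (1 - ρ i) := ⟨_, rfl⟩
  have hE1 : ((∑ i, ρ i * (Gc P0 P1 + cslope P0 P1 * (x1 i - 1/2)) : ℝ) : EReal)
      ≤ EJS ρ (fun i => if (i : ℕ) < kstar then P0 else P1) := by
    rw [hx1]
    exact ejs_lower P0 P1 hP00 hP10 f hf hsym ρ hρpos hρ1 hρlt (fun i => (i : ℕ) < kstar)
  have hE2 : ((∑ i, ρ i * (Gc P0 P1 + cslope P0 P1 * (x2 i - 1/2)) : ℝ) : EReal)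
      ≤ EJS ρ (fun i => if (i : ℕ) < kstar2 then P0 else P1) := by
    rw [hx2]
    exact ejs_lower P0 P1 hP00 hP10 f hf hsym ρ hρpos hρ1 hρlt (fun i => (i : ℕ) < kstar2)
  have hcomb' : l * (∑ i, ρ i * x1 i) + (1 - l) * (∑ i, ρ i * x2 i) ≤ 1/2 := by
    rw [hx1, hx2]
    exact hcomb
  have hc : cslope P0 P1 ≤ 0 := cslope_nonpos P0 P1 hP00 hP10 hP01 hP11
  have hrearr : ∀ x : Fin M → ℝ, (∑ i, ρ i * (Gc P0 P1 + cslope P0 P1 * (x i - 1/2)))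
      = Gc P0 P1 + cslope P0 P1 * ((∑ i, ρ i * x i) - 1/2) := by
    intro x
    have e : ∀ i ∈ univ, ρ i * (Gc P0 P1 + cslope P0 P1 * (x i - 1/2))
        = Gc P0 P1 * ρ i + cslope P0 P1 * (ρ i * x i) - cslope P0 P1 * (1/2) * ρ i :=
      fun i _ => by ring
    rw [Finset.sum_congr rfl e, Finset.sum_sub_distrib, Finset.sum_add_distrib,
      ← Finset.mul_sum, ← Finset.mul_sum, ← Finset.mul_sum, hρ1]
    ring
  have hreal : Gc P0 P1 ≤ l * (∑ i, ρ i * (Gc P0 P1 + cslope P0 P1 * (x1 i - 1/2)))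
      + (1 - l) * (∑ i, ρ i * (Gc P0 P1 + cslope P0 P1 * (x2 i - 1/2))) := by
    rw [hrearr x1, hrearr x2]
    have key : l * (Gc P0 P1 + cslope P0 P1 * ((∑ i, ρ i * x1 i) - 1/2))
        + (1 - l) * (Gc P0 P1 + cslope P0 P1 * ((∑ i, ρ i * x2 i) - 1/2)) - Gc P0 P1
        = cslope P0 P1 * ((l * (∑ i, ρ i * x1 i) + (1 - l) * (∑ i, ρ i * x2 i)) - 1/2) := by
      ring
    have key2 : 0 ≤ cslope P0 P1
        * ((l * (∑ i, ρ i * x1 i) + (1 - l) * (∑ i, ρ i * x2 i)) - 1/2) := by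
      nlinarith [hc, hcomb']
    linarith
  have hLHS : KL P0 (fun y => (1 / 2) * P0 y + (1 / 2) * P1 y) = ((Gc P0 P1 : ℝ) : EReal) := by
    rw [KL_eq_coe_s17 P0 _ (fun y hy => by
      have h0 : 0 < P0 y := lt_of_le_of_ne (hP00 y) (Ne.symm hy)
      have := hP10 y
      intro hcontra
      nlinarith [hcontra])]
    rfl
  rw [hLHS]
  have h1 := ereal_coe_mul_le hl0 hE1
  have h2 := ereal_coe_mul_le (by linarith : (0:ℝ) ≤ 1 - l) hE2
  calc ((Gc P0 P1 : ℝ) : EReal)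
      ≤ ((l * (∑ i, ρ i * (Gc P0 P1 + cslope P0 P1 * (x1 i - 1/2)))
        + (1 - l) * (∑ i, ρ i * (Gc P0 P1 + cslope P0 P1 * (x2 i - 1/2))) : ℝ) : EReal) :=
        EReal.coe_le_coe_iff.2 hreal
    _ = ((l * (∑ i, ρ i * (Gc P0 P1 + cslope P0 P1 * (x1 i - 1/2))) : ℝ) : EReal)
        + (((1 - l) * (∑ i, ρ i * (Gc P0 P1 + cslope P0 P1 * (x2 i - 1/2))) : ℝ) : EReal) :=
        EReal.coe_add _ _
    _ ≤ ((l : ℝ) : EReal) * EJS ρ (fun i => if (i : ℕ) < kstar then P0 else P1)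
        + ((1 - l : ℝ) : EReal) * EJS ρ (fun i => if (i : ℕ) < kstar2 then P0 else P1) :=
        add_le_add h1 h2
end
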